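/- arXiv:1006.4957 — 2 statements merged into one kernel-verified Lean document; each statement's English description precedes it below -/
import Mathlib

section
/- For every real number κ with 0 < κ ≤ 1 and every real t ≥ 0, one has χ_κ(t) + χ'_κ(t)²/(−χ''_κ(t)) ≤ 4κ⁻¹e^{κt}, where χ'_κ(t) = 1 + 1/(2e^{κt} − 1) and χ''_κ(t) = −2κe^{κt}/(2e^{κt} − 1)². -/
open Real MeasureTheory

/-- For `0 < κ ≤ 1`, the function `h_κ(t) = ∫₀ᵗ 1/(2e^{κy} − 1) dy`. -/
noncomputable def hKappa (κ t : ℝ) : ℝ :=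
  ∫ y in (0:ℝ)..t, 1 / (2 * Real.exp (κ * y) - 1)

/-- `χ_κ(t) = 1 + t + h_κ(t)`. -/
noncomputable def chiKappa (κ t : ℝ) : ℝ := 1 + t + hKappa κ t

/-- The first derivative of `χ_κ`: `χ'_κ(t) = 1 + 1/(2e^{κt} − 1)`. -/
noncomputable def chiKappa' (κ t : ℝ) : ℝ := 1 + 1 / (2 * Real.exp (κ * t) - 1)

/-- The second derivative of `χ_κ`: `χ''_κ(t) = −2κe^{κt}/(2e^{κt} − 1)²`. -/
noncomputable def chiKappa'' (κ t : ℝ) : ℝ :=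
  -(2 * κ * Real.exp (κ * t)) / (2 * Real.exp (κ * t) - 1) ^ 2

/-!
Since `χ'_κ = 2e^{κt}/(2e^{κt} − 1)`, the quotient `χ'_κ² / (−χ''_κ)` is exactly `2κ⁻¹e^{κt}`.
The integrand of `h_κ` is at most `1`, so `χ_κ(t) ≤ 1 + 2t`, and
`1 + 2t ≤ 2κ⁻¹(1 + κt) ≤ 2κ⁻¹e^{κt}` because `κ ≤ 1`.
-/

lemma one_le_two_mul_exp_sub_one {x : ℝ} (hx : 0 ≤ x) : 1 ≤ 2 * exp x - 1 := by
  linarith [one_le_exp hx]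

lemma chiKappa'_sq_div_neg_chiKappa'' {κ t : ℝ} (hκ : κ ≠ 0) (hκt : 0 ≤ κ * t) :
    chiKappa' κ t ^ 2 / (-chiKappa'' κ t) = 2 * κ⁻¹ * exp (κ * t) := by
  have hd : 2 * exp (κ * t) - 1 ≠ 0 := by
    linarith [one_le_two_mul_exp_sub_one hκt]
  unfold chiKappa' chiKappa''
  field_simp
  ring

lemma hKappa_le_self {κ t : ℝ} (hκ : 0 ≤ κ) (ht : 0 ≤ t) : hKappa κ t ≤ t := by
  have integrand_le_one : ∀ y ∈ Set.uIoc 0 t, ‖1 / (2 * exp (κ * y) - 1)‖ ≤ 1 := by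
    intro y hy
    rw [Set.uIoc_of_le ht] at hy
    have hd := one_le_two_mul_exp_sub_one (mul_nonneg hκ hy.1.le)
    rw [norm_div, norm_one, norm_of_nonneg (by linarith), div_le_one (by linarith)]
    exact hd
  calc hKappa κ t ≤ ‖hKappa κ t‖ := le_norm_self _
    _ ≤ 1 * |t - 0| := intervalIntegral.norm_integral_le_of_norm_le_const integrand_le_one
    _ = t := by rw [one_mul, sub_zero, abs_of_nonneg ht]

lemma chiKappa_le {κ t : ℝ} (hκ : 0 ≤ κ) (ht : 0 ≤ t) : chiKappa κ t ≤ 1 + 2 * t := by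
  unfold chiKappa
  linarith [hKappa_le_self hκ ht]

lemma one_add_two_mul_le_two_mul_inv_mul_exp {κ : ℝ} (hκ0 : 0 < κ) (hκ1 : κ ≤ 1) (t : ℝ) :
    1 + 2 * t ≤ 2 * κ⁻¹ * exp (κ * t) := by
  have hκinv : 1 ≤ κ⁻¹ := (one_le_inv₀ hκ0).2 hκ1
  calc 1 + 2 * t ≤ 2 * κ⁻¹ * (1 + κ * t) := by
        rw [mul_add, mul_one, mul_assoc, inv_mul_cancel_left₀ hκ0.ne']
        linarith
    _ ≤ 2 * κ⁻¹ * exp (κ * t) := by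
        gcongr
        linarith [add_one_le_exp (κ * t)]

theorem chiKappa_plus_lambda_bound (κ : ℝ) (hκ0 : 0 < κ) (hκ1 : κ ≤ 1)
    (t : ℝ) (ht : 0 ≤ t) :
    chiKappa κ t + (chiKappa' κ t) ^ 2 / (-(chiKappa'' κ t)) ≤
      4 * κ⁻¹ * Real.exp (κ * t) := by
  rw [chiKappa'_sq_div_neg_chiKappa'' hκ0.ne' (mul_nonneg hκ0.le ht)]
  linarith [chiKappa_le hκ0.le ht, one_add_two_mul_le_two_mul_inv_mul_exp hκ0 hκ1 t]
end

section
/- Let q ≥ 1 be a natural number and A, C ≥ 0 real numbers. Suppose h : ℕ → ℝ is a sequence of nonnegative reals and z ≥ 0 a real number such that: h(0) ≤ A/√q + C/√((q+1)q); for every ℓ with 1 ≤ ℓ ≤ q−1, h(ℓ) ≤ √((ℓ+1)/(q−ℓ))·h(ℓ−1) + √((ℓ+1)!·(q−ℓ−1)!/(q+1)!)·C; and z ≤ √(q+1)·h(q−1) + C. Then z ≤ √(q+1)·A + (q+1)·C. -/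
open Real Nat

/-!
With the weights `c ℓ = factorialWeight q ℓ = √((ℓ+1)! (q-ℓ-1)! / (q+1)!)` the coefficient `√((ℓ+1)/(q-ℓ))` of the
recursion is exactly `c ℓ / c (ℓ-1)`, so `h ℓ / c ℓ` grows by at most `C` per step. Since
`c 0 = 1/√((q+1)q)` and `c (q-1) = 1/√(q+1)`, this gives `h (q-1) ≤ A + q C / √(q+1)`.
-/

theorem le_mul_add_mul_of_le_mul_add {r c h : ℕ → ℝ} {B C : ℝ} {n : ℕ}
    (hr : ∀ ℓ, 0 ≤ r ℓ) (hc : ∀ ℓ, 1 ≤ ℓ → ℓ ≤ n → c ℓ = r ℓ * c (ℓ - 1))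
    (h0 : h 0 ≤ c 0 * B) (hrec : ∀ ℓ, 1 ≤ ℓ → ℓ ≤ n → h ℓ ≤ r ℓ * h (ℓ - 1) + c ℓ * C) :
    ∀ ℓ ≤ n, h ℓ ≤ c ℓ * (B + ℓ * C) := by
  intro ℓ
  induction ℓ with
  | zero => simpa using h0
  | succ ℓ ih =>
    intro hℓ
    have hc' := hc (ℓ + 1) le_add_self hℓ
    have hrec' := hrec (ℓ + 1) le_add_self hℓ
    simp only [Nat.add_sub_cancel] at hc' hrec'
    calc h (ℓ + 1) ≤ r (ℓ + 1) * (c ℓ * (B + ℓ * C)) + c (ℓ + 1) * C :=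
          hrec'.trans (by gcongr; exacts [hr _, ih (by omega)])
      _ = c (ℓ + 1) * (B + ↑(ℓ + 1) * C) := by rw [hc']; push_cast; ring

noncomputable def factorialWeight (q ℓ : ℕ) : ℝ :=
  √(((ℓ + 1)! * (q - ℓ - 1)! : ℝ) / (q + 1)!)

theorem factorialWeight_zero {q : ℕ} (hq : 1 ≤ q) :
    factorialWeight q 0 = 1 / √((q + 1) * q) := by
  obtain ⟨k, rfl⟩ := Nat.exists_eq_add_of_le' hq
  rw [factorialWeight, one_div, ← Real.sqrt_inv]
  congr 1
  simp only [Nat.add_sub_cancel, Nat.sub_zero, Nat.factorial_succ, Nat.factorial_zero]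
  push_cast
  field_simp

theorem factorialWeight_pred {q : ℕ} (hq : 1 ≤ q) :
    factorialWeight q (q - 1) = 1 / √(q + 1) := by
  rw [factorialWeight, Nat.sub_add_cancel hq, Nat.sub_sub_self hq, Nat.sub_self,
    one_div, ← Real.sqrt_inv, Nat.factorial_succ, Nat.factorial_zero]
  push_cast
  field_simp

theorem factorialWeight_eq_mul {q ℓ : ℕ} (hℓ : 1 ≤ ℓ) (hℓq : ℓ < q) :
    factorialWeight q ℓ = √((ℓ + 1) / (q - ℓ)) * factorialWeight q (ℓ - 1) := by
  obtain ⟨m, rfl⟩ := Nat.exists_eq_add_of_le' hℓ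
  obtain ⟨k, rfl⟩ := Nat.exists_eq_add_of_lt hℓq
  have hsub : ((m + 1 + k + 1 : ℕ) : ℝ) - (m + 1 : ℕ) = k + 1 := by push_cast; ring
  rw [factorialWeight, factorialWeight, hsub, ← Real.sqrt_mul' _ (by positivity)]
  congr 1
  rw [show m + 1 + k + 1 - (m + 1) - 1 = k by omega, show m + 1 - 1 + 1 = m + 1 by omega,
    show m + 1 + k + 1 - (m + 1 - 1) - 1 = k + 1 by omega]
  push_cast [Nat.factorial_succ]
  field_simp

theorem estim_recursion_general (q : ℕ) (hq : 1 ≤ q) (A C : ℝ)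
    (h : ℕ → ℝ) (z : ℝ)
    (h0 : h 0 ≤ A / Real.sqrt q + C / Real.sqrt ((q + 1) * q))
    (hrec : ∀ ℓ : ℕ, 1 ≤ ℓ → ℓ ≤ q - 1 →
      h ℓ ≤ Real.sqrt (((ℓ : ℝ) + 1) / ((q : ℝ) - ℓ)) * h (ℓ - 1) +
        Real.sqrt (((ℓ + 1).factorial * (q - ℓ - 1).factorial : ℝ) /
          ((q + 1).factorial : ℝ)) * C)
    (hzle : z ≤ Real.sqrt ((q : ℝ) + 1) * h (q - 1) + C) :
    z ≤ Real.sqrt ((q : ℝ) + 1) * A + ((q : ℝ) + 1) * C := by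
  have hq' : (0 : ℝ) < q := by exact_mod_cast hq
  have h0' : h 0 ≤ factorialWeight q 0 * (√(q + 1) * A + C) := by
    rw [factorialWeight_zero hq]
    rw [Real.sqrt_mul' _ hq'.le] at h0 ⊢
    convert h0 using 1
    field_simp
  have hlast := le_mul_add_mul_of_le_mul_add (fun _ ↦ Real.sqrt_nonneg _)
    (fun ℓ hℓ hℓq ↦ factorialWeight_eq_mul hℓ (by omega)) h0' hrec (q - 1) le_rfl
  rw [factorialWeight_pred hq, Nat.cast_sub hq, Nat.cast_one] at hlast
  calc z ≤ √(q + 1) * h (q - 1) + C := hzle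
    _ ≤ √(q + 1) * (1 / √(q + 1) * (√(q + 1) * A + C + (q - 1) * C)) + C := by gcongr
    _ = √(q + 1) * A + (q + 1) * C := by field_simp; ring

theorem estim_recursion (q : ℕ) (hq : 1 ≤ q) (A C : ℝ) (hA : 0 ≤ A) (hC : 0 ≤ C)
    (h : ℕ → ℝ) (hnn : ∀ ℓ, 0 ≤ h ℓ) (z : ℝ) (hz0 : 0 ≤ z)
    (h0 : h 0 ≤ A / Real.sqrt q + C / Real.sqrt ((q + 1) * q))
    (hrec : ∀ ℓ : ℕ, 1 ≤ ℓ → ℓ ≤ q - 1 →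
      h ℓ ≤ Real.sqrt (((ℓ : ℝ) + 1) / ((q : ℝ) - ℓ)) * h (ℓ - 1) +
        Real.sqrt (((ℓ + 1).factorial * (q - ℓ - 1).factorial : ℝ) /
          ((q + 1).factorial : ℝ)) * C)
    (hzle : z ≤ Real.sqrt ((q : ℝ) + 1) * h (q - 1) + C) :
    z ≤ Real.sqrt ((q : ℝ) + 1) * A + ((q : ℝ) + 1) * C :=
  estim_recursion_general q hq A C h z h0 hrec hzle
end
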